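/- Let p ≥ 1, let E₁,…,Eₙ and F be Banach spaces over 𝕂, and let A ∈ L(E₁,…,Eₙ,𝕂;F) be a continuous (n+1)-linear map whose last variable ranges over 𝕂. Then A is strongly multiple p-summing if and only if A1 ∈ L(E₁,…,Eₙ;F), defined by A1(x₁,…,xₙ) = A(x₁,…,xₙ,1), is strongly multiple p-summing, and in that case ‖A‖_{sm,p} = ‖A1‖_{sm,p}. (The ideal L_{sm,p} has property [B].) -/

import Mathlib

/-- `T ∈ L(E₁,…,Eₙ;F)` is strongly multiple `p`-summing with constant `C`. -/
def StronglyMultipleSumming {𝕜 : Type*} [RCLike 𝕜] {n : ℕ} {E : Fin n → Type*}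
    [∀ i, NormedAddCommGroup (E i)] [∀ i, NormedSpace 𝕜 (E i)]
    {F : Type*} [NormedAddCommGroup F] [NormedSpace 𝕜 F]
    (p : ℝ) (C : ℝ) (T : ContinuousMultilinearMap 𝕜 E F) : Prop :=
  ∀ (m : ℕ) (x : Π l, Fin m → E l),
    (∑ j : Fin n → Fin m, ‖T (fun l => x l (j l))‖ ^ p) ^ (1/p)
      ≤ C * (⨆ φ : {φ : ContinuousMultilinearMap 𝕜 E 𝕜 // ‖φ‖ ≤ 1},
          ∑ j : Fin n → Fin m, ‖φ.1 (fun l => x l (j l))‖ ^ p) ^ (1/p)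

/-- A continuous `(n+1)`-linear map `A : E₁ × ⋯ × Eₙ × 𝕜 → F` (encoded in curried form,
with values in `𝕜 →L[𝕜] F`) is strongly multiple `p`-summing with constant `C`; the
`(n+1)`-st space is `𝕜` with the absolute value, and the sup runs over the unit ball of
the continuous `(n+1)`-linear forms on `E₁ × ⋯ × Eₙ × 𝕜` (in curried form, with the
canonical (isometric) norm). -/
def StronglyMultipleSumming' {𝕜 : Type*} [RCLike 𝕜] {n : ℕ} {E : Fin n → Type*}
    [∀ i, NormedAddCommGroup (E i)] [∀ i, NormedSpace 𝕜 (E i)]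
    {F : Type*} [NormedAddCommGroup F] [NormedSpace 𝕜 F]
    (p : ℝ) (C : ℝ) (A : ContinuousMultilinearMap 𝕜 E (𝕜 →L[𝕜] F)) : Prop :=
  ∀ (m : ℕ) (x : Π l, Fin m → E l) (y : Fin m → 𝕜),
    (∑ j : Fin n → Fin m, ∑ k : Fin m, ‖A (fun l => x l (j l)) (y k)‖ ^ p) ^ (1/p)
      ≤ C * (⨆ ψ : {ψ : ContinuousMultilinearMap 𝕜 E (𝕜 →L[𝕜] 𝕜) // ‖ψ‖ ≤ 1},
          ∑ j : Fin n → Fin m, ∑ k : Fin m, ‖ψ.1 (fun l => x l (j l)) (y k)‖ ^ p) ^ (1/p)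

/-- The map `A1 : E₁ × ⋯ × Eₙ → F`, `A1(x₁,…,xₙ) = A(x₁,…,xₙ,1)`. -/
noncomputable def Aone {𝕜 : Type*} [RCLike 𝕜] {n : ℕ} {E : Fin n → Type*}
    [∀ i, NormedAddCommGroup (E i)] [∀ i, NormedSpace 𝕜 (E i)]
    {F : Type*} [NormedAddCommGroup F] [NormedSpace 𝕜 F]
    (A : ContinuousMultilinearMap 𝕜 E (𝕜 →L[𝕜] F)) : ContinuousMultilinearMap 𝕜 E F :=
  (ContinuousLinearMap.apply 𝕜 F (1 : 𝕜)).compContinuousMultilinearMap A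


/-!
Since `A(x₁,…,xₙ,t) = t • A1(x₁,…,xₙ)`, every sum in the definition for `A` factorises as
`(∑ₖ |tₖ|^p)` times the corresponding sum for `A1`. The same holds for the `(n+1)`-linear forms
`ψ` in the supremum, and `ψ ↦ ψ(·,1)` maps the unit ball of these forms onto the unit ball of
the `n`-linear forms. So for every `t ≠ 0` the defining inequality for `A` is the one for `A1`
multiplied by `(∑ₖ |tₖ|^p)^{1/p}`, and the two summing conditions coincide for each constant.
-/

section PropertyB

variable {𝕜 : Type*} [RCLike 𝕜] {n : ℕ} {E : Fin n → Type*}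
  [∀ i, NormedAddCommGroup (E i)] [∀ i, NormedSpace 𝕜 (E i)]
  {G : Type*} [NormedAddCommGroup G] [NormedSpace 𝕜 G]

@[simp]
theorem Aone_apply (B : ContinuousMultilinearMap 𝕜 E (𝕜 →L[𝕜] G)) (v : Π l, E l) :
    Aone B v = B v 1 :=
  rfl

open ContinuousLinearMap in
theorem norm_Aone (B : ContinuousMultilinearMap 𝕜 E (𝕜 →L[𝕜] G)) : ‖Aone B‖ = ‖B‖ :=
  (toSpanSingletonLIE 𝕜 G).symm.toLinearIsometry.norm_compContinuousMultilinearMap B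

open ContinuousLinearMap in
theorem Aone_surjective :
    Function.Surjective (Aone : ContinuousMultilinearMap 𝕜 E (𝕜 →L[𝕜] G) → _) := fun φ =>
  ⟨(toSpanSingletonLIE 𝕜 G : G →L[𝕜] 𝕜 →L[𝕜] G).compContinuousMultilinearMap φ, by ext; simp⟩

theorem ContinuousLinearMap.norm_apply_eq_norm_mul_norm_apply_one (f : 𝕜 →L[𝕜] G) (t : 𝕜) :
    ‖f t‖ = ‖t‖ * ‖f 1‖ := by
  rw [← norm_smul, ← f.map_smul, smul_eq_mul, mul_one]

theorem sum_sum_norm_rpow_eq_mul (p : ℝ) (B : ContinuousMultilinearMap 𝕜 E (𝕜 →L[𝕜] G))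
    {m : ℕ} (x : Π l, Fin m → E l) (t : Fin m → 𝕜) :
    ∑ j : Fin n → Fin m, ∑ k : Fin m, ‖B (fun l => x l (j l)) (t k)‖ ^ p
      = (∑ k : Fin m, ‖t k‖ ^ p) * ∑ j : Fin n → Fin m, ‖Aone B (fun l => x l (j l))‖ ^ p := by
  simp only [ContinuousLinearMap.norm_apply_eq_norm_mul_norm_apply_one _ (t _), Aone_apply,
    Real.mul_rpow (norm_nonneg _) (norm_nonneg _), ← Finset.sum_mul, Finset.mul_sum]

theorem iSup_sum_sum_norm_rpow_eq_mul (p : ℝ) {m : ℕ} (x : Π l, Fin m → E l) (t : Fin m → 𝕜) :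
    ⨆ ψ : {ψ : ContinuousMultilinearMap 𝕜 E (𝕜 →L[𝕜] 𝕜) // ‖ψ‖ ≤ 1},
        ∑ j : Fin n → Fin m, ∑ k : Fin m, ‖ψ.1 (fun l => x l (j l)) (t k)‖ ^ p
      = (∑ k : Fin m, ‖t k‖ ^ p) * ⨆ φ : {φ : ContinuousMultilinearMap 𝕜 E 𝕜 // ‖φ‖ ≤ 1},
          ∑ j : Fin n → Fin m, ‖φ.1 (fun l => x l (j l))‖ ^ p := by
  have hball : Function.Surjective
      fun ψ : {ψ : ContinuousMultilinearMap 𝕜 E (𝕜 →L[𝕜] 𝕜) // ‖ψ‖ ≤ 1} =>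
        (⟨Aone ψ.1, (norm_Aone ψ.1).trans_le ψ.2⟩ :
          {φ : ContinuousMultilinearMap 𝕜 E 𝕜 // ‖φ‖ ≤ 1}) := by
    rintro ⟨φ, hφ⟩
    obtain ⟨ψ, rfl⟩ := Aone_surjective φ
    exact ⟨⟨ψ, (norm_Aone ψ).symm.trans_le hφ⟩, rfl⟩
  simp only [sum_sum_norm_rpow_eq_mul]
  rw [Real.mul_iSup_of_nonneg (Finset.sum_nonneg fun _ _ => by positivity)]
  exact hball.iSup_congr _ fun _ => rfl

theorem mul_rpow_le_mul_mul_rpow_iff {S a s : ℝ} (hS : 0 < S) (ha : 0 ≤ a) (hs : 0 ≤ s)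
    (C r : ℝ) : (S * a) ^ r ≤ C * (S * s) ^ r ↔ a ^ r ≤ C * s ^ r := by
  rw [Real.mul_rpow hS.le ha, Real.mul_rpow hS.le hs, mul_left_comm,
    mul_le_mul_iff_right₀ (Real.rpow_pos_of_pos hS r)]

variable {F : Type*} [NormedAddCommGroup F] [NormedSpace 𝕜 F]

theorem stronglyMultipleSumming'_iff_forall_mul (p C : ℝ)
    (A : ContinuousMultilinearMap 𝕜 E (𝕜 →L[𝕜] F)) :
    StronglyMultipleSumming' p C A ↔ ∀ (m : ℕ) (x : Π l, Fin m → E l) (t : Fin m → 𝕜),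
      ((∑ k : Fin m, ‖t k‖ ^ p) * ∑ j : Fin n → Fin m, ‖Aone A (fun l => x l (j l))‖ ^ p) ^ (1/p)
        ≤ C * ((∑ k : Fin m, ‖t k‖ ^ p) *
          ⨆ φ : {φ : ContinuousMultilinearMap 𝕜 E 𝕜 // ‖φ‖ ≤ 1},
            ∑ j : Fin n → Fin m, ‖φ.1 (fun l => x l (j l))‖ ^ p) ^ (1/p) := by
  simp only [StronglyMultipleSumming', iSup_sum_sum_norm_rpow_eq_mul]
  simp only [sum_sum_norm_rpow_eq_mul]

theorem stronglyMultipleSumming'_iff (hn : 1 ≤ n) {p : ℝ} (hp : 0 < p) (C : ℝ)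
    (A : ContinuousMultilinearMap 𝕜 E (𝕜 →L[𝕜] F)) :
    StronglyMultipleSumming' p C A ↔ StronglyMultipleSumming p C (Aone A) := by
  have hp' : p⁻¹ ≠ 0 := inv_ne_zero hp.ne'
  rw [stronglyMultipleSumming'_iff_forall_mul]
  constructor
  · intro h m x
    cases m with
    | zero =>
      -- with `n ≥ 1` there are no multi-indices `Fin n → Fin 0`, so both sides vanish
      have : IsEmpty (Fin n → Fin 0) := ⟨fun j => (j ⟨0, hn⟩).elim0⟩
      simp [Real.zero_rpow hp']
    | succ m =>
      have hsingle : ∑ k : Fin (m + 1), ‖(Pi.single 0 1 : Fin (m + 1) → 𝕜) k‖ ^ p = 1 := by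
        rw [Fintype.sum_eq_single 0 fun k hk => by simp [hk, Real.zero_rpow hp.ne']]
        simp
      simpa [hsingle] using h (m + 1) x (Pi.single 0 1)
  · intro h m x t
    rcases (Finset.sum_nonneg fun k _ => by positivity :
        0 ≤ ∑ k : Fin m, ‖t k‖ ^ p).eq_or_lt with hS | hS
    · simp [← hS, Real.zero_rpow hp']
    · exact (mul_rpow_le_mul_mul_rpow_iff hS (Finset.sum_nonneg fun _ _ => by positivity)
        (Real.iSup_nonneg fun _ => Finset.sum_nonneg fun _ _ => by positivity) _ _).mpr (h m x)

end PropertyB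

theorem stronglyMultipleSumming_propertyB_general {𝕜 : Type*} [RCLike 𝕜] {n : ℕ} (hn : 1 ≤ n)
    (E : Fin n → Type*) [∀ i, NormedAddCommGroup (E i)] [∀ i, NormedSpace 𝕜 (E i)]
    (F : Type*) [NormedAddCommGroup F] [NormedSpace 𝕜 F]
    (p : ℝ) (hp : 1 ≤ p) (A : ContinuousMultilinearMap 𝕜 E (𝕜 →L[𝕜] F)) :
    ((∃ C, 0 ≤ C ∧ StronglyMultipleSumming' p C A) ↔
      (∃ C, 0 ≤ C ∧ StronglyMultipleSumming p C (Aone A))) ∧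
    ((∃ C, 0 ≤ C ∧ StronglyMultipleSumming' p C A) →
      sInf {C | 0 ≤ C ∧ StronglyMultipleSumming' p C A}
        = sInf {C | 0 ≤ C ∧ StronglyMultipleSumming p C (Aone A)}) := by
  have key : ∀ C : ℝ, (0 ≤ C ∧ StronglyMultipleSumming' p C A) ↔
      (0 ≤ C ∧ StronglyMultipleSumming p C (Aone A)) :=
    fun C => and_congr_right fun _ => stronglyMultipleSumming'_iff hn (zero_lt_one.trans_le hp) C A
  exact ⟨exists_congr key, fun _ => congrArg sInf (Set.ext key)⟩

/-- The ideal `L_{sm,p}` has property [B]: a continuous `(n+1)`-linear map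
`A : E₁ × ⋯ × Eₙ × 𝕜 → F` is strongly multiple `p`-summing iff `A1` is, and in that
case `‖A‖_{sm,p} = ‖A1‖_{sm,p}`. -/
theorem stronglyMultipleSumming_propertyB {𝕜 : Type*} [RCLike 𝕜] {n : ℕ} (hn : 1 ≤ n)
    (E : Fin n → Type*) [∀ i, NormedAddCommGroup (E i)] [∀ i, NormedSpace 𝕜 (E i)]
    [∀ i, CompleteSpace (E i)]
    (F : Type*) [NormedAddCommGroup F] [NormedSpace 𝕜 F] [CompleteSpace F]
    (p : ℝ) (hp : 1 ≤ p) (A : ContinuousMultilinearMap 𝕜 E (𝕜 →L[𝕜] F)) :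
    ((∃ C, 0 ≤ C ∧ StronglyMultipleSumming' p C A) ↔
      (∃ C, 0 ≤ C ∧ StronglyMultipleSumming p C (Aone A))) ∧
    ((∃ C, 0 ≤ C ∧ StronglyMultipleSumming' p C A) →
      sInf {C | 0 ≤ C ∧ StronglyMultipleSumming' p C A}
        = sInf {C | 0 ≤ C ∧ StronglyMultipleSumming p C (Aone A)}) :=
  stronglyMultipleSumming_propertyB_general hn E F p hp A
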